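/- Fix p ∈ (0,1) and set k_n = ⌈2 ln n / p⌉. Then the probability, under G(n,p), of the event that every vertex subset A ⊆ Fin n satisfies |𝒩(A)| ≤ 2 · ∑_{i=0}^{k_n} C(n,i) tends to 1 as n → ∞. In particular, there is a constant c > 0 such that almost surely every cut {A, Ā} of G(n,p) satisfies cut-bool(A) ≤ c · (ln n)² / p, so every decomposition tree of G(n,p) almost surely has boolean-width O((ln n)²/p). -/

import Mathlib

open Finset MeasureTheory Filter
open scoped ENNReal

/-- The simple graph on `Fin n` determined by an indicator of edges,
a function from 2-element subsets (unordered pairs) of `Fin n` to `Bool`. -/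
def graphOf {n : ℕ} (f : Sym2 (Fin n) → Bool) : SimpleGraph (Fin n) where
  Adj v w := v ≠ w ∧ f s(v, w) = true
  symm := ⟨fun v w ⟨h, hf⟩ => ⟨h.symm, by rwa [Sym2.eq_swap]⟩⟩
  loopless := ⟨fun v ⟨h, _⟩ => h rfl⟩

instance {n : ℕ} (f : Sym2 (Fin n) → Bool) : DecidableRel (graphOf f).Adj :=
  fun v w => inferInstanceAs (Decidable (v ≠ w ∧ f s(v, w) = true))

/-- The Erdős–Rényi random graph `G(n,p)`: product Bernoulli(p) measure on
edge-indicator functions. -/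
noncomputable def gnp (n : ℕ) (p : ℝ) (hp : p ≤ 1) :
    Measure (Sym2 (Fin n) → Bool) :=
  Measure.pi fun _ =>
    (PMF.bernoulli (Real.toNNReal p) (Real.toNNReal_le_one.mpr hp)).toMeasure

/-- The external neighborhood `N(X)`: vertices outside `X` adjacent to some vertex of `X`. -/
noncomputable def extNbhd {V : Type*} [Fintype V] (G : SimpleGraph V) (X : Finset V) :
    Finset V := by
  classical exact Finset.univ.filter fun v => v ∉ X ∧ ∃ x ∈ X, G.Adj x v

/-- The neighborhood family of the cut `{A, Ā}`: the sets `N(X) ∩ Ā` for `X ⊆ A`. -/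
noncomputable def nbhdFamily {V : Type*} [Fintype V] [DecidableEq V] (G : SimpleGraph V)
    (A : Finset V) : Finset (Finset V) :=
  A.powerset.image fun X => extNbhd G X ∩ Aᶜ

open scoped Nat

/-! If every two disjoint `k`-sets of vertices are joined by an edge, then for `X ⊆ A` either
`|X| ≤ k`, or `Ā \ N(X)` has fewer than `k` elements and `N(X) ∩ Ā = Ā \ (Ā \ N(X))`; either way
the member `N(X) ∩ Ā` of `𝒩(A)` is determined by a set of at most `k` vertices, so
`|𝒩(A)| ≤ 2 ∑_{i ≤ k} C(n,i)`. In `G(n,p)` a fixed pair of disjoint `k`-sets spans no edge with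
probability `(1-p)^{k²}`, and the union bound over the at most `C(n,k)²` pairs bounds the failure
probability by `(n^k / k!)² e^{-pk²} ≤ 1 / k!²` as soon as `pk ≥ 2 ln n`. Finally
`2 ∑_{i ≤ k} C(n,i) ≤ n^{k+2}`, whose base-2 logarithm is `O((ln n)² / p)` for
`k = ⌈2 ln n / p⌉`. -/

section Cuts

variable {V : Type*} [Fintype V]

lemma mem_extNbhd {G : SimpleGraph V} {X : Finset V} {v : V} :
    v ∈ extNbhd G X ↔ v ∉ X ∧ ∃ x ∈ X, G.Adj x v := by
  classical
  simp [extNbhd]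

lemma card_filter_card_le_eq_sum_choose (k : ℕ) :
    #(univ.filter fun X : Finset V => #X ≤ k) = ∑ i ∈ range (k + 1), (Fintype.card V).choose i := by
  classical
  rw [card_eq_sum_card_fiberwise (f := card) (t := range (k + 1))
    (fun X hX => by simpa [Nat.lt_succ_iff] using hX)]
  refine sum_congr rfl fun i hi => ?_
  rw [← card_univ, ← card_powersetCard]
  congr 1
  ext X
  simp only [mem_filter, mem_univ, true_and, mem_powersetCard_univ, and_iff_right_iff_imp]
  rintro rfl
  simpa [Nat.lt_succ_iff] using hi

namespace SimpleGraph

def JoinsDisjointSets (G : SimpleGraph V) (k : ℕ) : Prop :=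
  ∀ X Y : Finset V, #X = k → #Y = k → Disjoint X Y → ∃ x ∈ X, ∃ y ∈ Y, G.Adj x y

variable [DecidableEq V] {G : SimpleGraph V} {k : ℕ}

lemma JoinsDisjointSets.card_sdiff_extNbhd_lt (hG : G.JoinsDisjointSets k) {A X : Finset V}
    (hXA : X ⊆ A) (hX : k ≤ #X) : #(Aᶜ \ extNbhd G X) < k := by
  by_contra! hZ
  obtain ⟨Y, hY, hYk⟩ := exists_subset_card_eq hZ
  obtain ⟨X', hX', hX'k⟩ := exists_subset_card_eq hX
  have hdisj : Disjoint X' Y :=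
    disjoint_of_subset_left (hX'.trans hXA) (disjoint_of_subset_right (hY.trans sdiff_subset)
      disjoint_compl_right)
  obtain ⟨x, hx, y, hy, hxy⟩ := hG X' Y hX'k hYk hdisj
  have hyA := mem_sdiff.mp (hY hy)
  exact hyA.2 (mem_extNbhd.mpr ⟨fun hyX => mem_compl.mp hyA.1 (hXA hyX), x, hX' hx, hxy⟩)

lemma JoinsDisjointSets.card_nbhdFamily_le (hG : G.JoinsDisjointSets k) (A : Finset V) :
    #(nbhdFamily G A) ≤ 2 * ∑ i ∈ range (k + 1), (Fintype.card V).choose i := by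
  set small := univ.filter fun X : Finset V => #X ≤ k
  have hcover : nbhdFamily G A ⊆
      small.image (fun X => extNbhd G X ∩ Aᶜ) ∪ small.image (fun Z => Aᶜ \ Z) := by
    simp only [nbhdFamily, image_subset_iff, mem_powerset]
    intro X hXA
    rcases le_or_gt #X k with hX | hX
    · exact mem_union_left _ (mem_image_of_mem _ (by simpa [small] using hX))
    · refine mem_union_right _ (mem_image.mpr ⟨Aᶜ \ extNbhd G X, ?_, ?_⟩)
      · simpa [small] using (hG.card_sdiff_extNbhd_lt hXA hX.le).le
      · rw [sdiff_sdiff_right_self, inf_eq_inter, inter_comm]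
  calc #(nbhdFamily G A) ≤ #small + #small :=
        (card_le_card hcover).trans <|
          (card_union_le _ _).trans (add_le_add card_image_le card_image_le)
    _ = _ := by rw [card_filter_card_le_eq_sum_choose, two_mul]

end SimpleGraph

end Cuts

instance gnp.instIsProbabilityMeasure (n : ℕ) {p : ℝ} (hp : p ≤ 1) :
    IsProbabilityMeasure (gnp n p hp) := by
  unfold gnp; infer_instance

lemma gnp_forall_eq_false {n : ℕ} {p : ℝ} (hp0 : 0 ≤ p) (hp1 : p ≤ 1) (E : Finset (Sym2 (Fin n))) :
    gnp n p hp1 {f | ∀ e ∈ E, f e = false} = ENNReal.ofReal (1 - p) ^ #E := by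
  classical
  have hpi : {f : Sym2 (Fin n) → Bool | ∀ e ∈ E, f e = false} =
      Set.univ.pi fun e => if e ∈ E then {false} else Set.univ := by
    ext f
    simp only [Set.mem_univ_pi]
    refine forall_congr' fun e => ?_
    split_ifs <;> simp_all
  have hfalse : (PMF.bernoulli p.toNNReal (Real.toNNReal_le_one.mpr hp1)).toMeasure {false} =
      ENNReal.ofReal (1 - p) := by
    rw [PMF.toMeasure_apply_singleton _ _ (measurableSet_singleton _), PMF.bernoulli_apply,
      cond_false, ENNReal.ofReal, NNReal.sub_def, NNReal.coe_one, Real.coe_toNNReal _ hp0]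
  rw [gnp, hpi, Measure.pi_pi]
  simp only [apply_ite, hfalse, measure_univ, prod_ite_mem, univ_inter, prod_const]

lemma card_image₂_sym2Mk {α : Type*} [DecidableEq α] {X Y : Finset α} (h : Disjoint X Y) :
    #(image₂ Sym2.mk X Y) = #X * #Y := by
  refine card_image₂_iff.mpr ?_
  rintro ⟨a, b⟩ hab ⟨c, d⟩ hcd habcd
  simp only [Set.mem_prod, mem_coe] at hab hcd
  rcases Sym2.eq_iff.mp habcd with ⟨rfl, rfl⟩ | ⟨rfl, rfl⟩
  · rfl
  · exact absurd hcd.2 (Finset.disjoint_left.mp h hab.1)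

lemma gnp_not_joinsDisjointSets_le {n : ℕ} {p : ℝ} (hp0 : 0 ≤ p) (hp1 : p ≤ 1) (k : ℕ) :
    gnp n p hp1 {f | ¬ (graphOf f).JoinsDisjointSets k} ≤
      ENNReal.ofReal ((n.choose k : ℝ) ^ 2 * (1 - p) ^ (k * k)) := by
  classical
  set pairs := (powersetCard k univ ×ˢ powersetCard k univ).filter
    fun XY : Finset (Fin n) × Finset (Fin n) => Disjoint XY.1 XY.2
  have hcover : {f | ¬ (graphOf f).JoinsDisjointSets k} ⊆
      ⋃ XY ∈ pairs, {f | ∀ e ∈ image₂ Sym2.mk XY.1 XY.2, f e = false} := by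
    intro f hf
    simp only [SimpleGraph.JoinsDisjointSets, not_forall, not_exists, not_and] at hf
    obtain ⟨X, Y, hX, hY, hXY, hno⟩ := hf
    refine Set.mem_biUnion (x := (X, Y)) (by simp [pairs, hX, hY, hXY]) ?_
    simp only [mem_image₂, forall_exists_index, and_imp]
    rintro _ x hx y hy rfl
    have hxy : x ≠ y := fun h => Finset.disjoint_left.mp hXY hx (h ▸ hy)
    simpa [graphOf, hxy] using hno x hx y hy
  calc gnp n p hp1 {f | ¬ (graphOf f).JoinsDisjointSets k}
      ≤ ∑ XY ∈ pairs, gnp n p hp1 {f | ∀ e ∈ image₂ Sym2.mk XY.1 XY.2, f e = false} :=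
        (measure_mono hcover).trans (measure_biUnion_finset_le _ _)
    _ = ∑ XY ∈ pairs, ENNReal.ofReal (1 - p) ^ (k * k) := by
        refine sum_congr rfl fun XY hXY => ?_
        simp only [pairs, mem_filter, mem_product, mem_powersetCard_univ] at hXY
        rw [gnp_forall_eq_false hp0, card_image₂_sym2Mk hXY.2, hXY.1.1, hXY.1.2]
    _ ≤ (n.choose k : ℝ≥0∞) ^ 2 * ENNReal.ofReal (1 - p) ^ (k * k) := by
        rw [sum_const, nsmul_eq_mul, sq]
        gcongr
        exact_mod_cast (card_filter_le _ _).trans_eq (by simp [card_product])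
    _ = ENNReal.ofReal ((n.choose k : ℝ) ^ 2 * (1 - p) ^ (k * k)) := by
        rw [ENNReal.ofReal_mul (by positivity), ENNReal.ofReal_pow (by positivity),
          ENNReal.ofReal_pow (by linarith), ENNReal.ofReal_natCast]

lemma choose_sq_mul_one_sub_pow_le {n k : ℕ} {p : ℝ} (hp1 : p ≤ 1) (hn : 0 < n)
    (hk : 2 * Real.log n ≤ p * k) :
    (n.choose k : ℝ) ^ 2 * (1 - p) ^ (k * k) ≤ ((k ! : ℝ)⁻¹) ^ 2 := by
  have hchoose : (n.choose k : ℝ) * k ! ≤ (n : ℝ) ^ k :=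
    (le_div_iff₀ (by positivity)).mp (Nat.choose_le_pow_div k n)
  have hbase : (n : ℝ) ^ 2 * (1 - p) ^ k ≤ 1 := calc
    (n : ℝ) ^ 2 * (1 - p) ^ k ≤ Real.exp (2 * Real.log n) * Real.exp (-p) ^ k := by
        rw [← Real.exp_log (by positivity : (0 : ℝ) < n ^ 2), Real.log_pow, Nat.cast_ofNat]
        gcongr
        linarith [Real.add_one_le_exp (-p)]
    _ ≤ 1 := by
        rw [← Real.exp_nat_mul, ← Real.exp_add, Real.exp_le_one_iff]
        linarith
  rw [inv_pow, ← one_div, le_div_iff₀ (by positivity)]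
  calc (n.choose k : ℝ) ^ 2 * (1 - p) ^ (k * k) * (k ! : ℝ) ^ 2
      = ((n.choose k : ℝ) * k !) ^ 2 * (1 - p) ^ (k * k) := by ring
    _ ≤ ((n : ℝ) ^ k) ^ 2 * (1 - p) ^ (k * k) := by gcongr
    _ = ((n : ℝ) ^ 2 * (1 - p) ^ k) ^ k := by ring
    _ ≤ 1 := pow_le_one₀ (by have := sub_nonneg.mpr hp1; positivity) hbase

lemma two_mul_sum_choose_le_pow {n : ℕ} (hn : 2 ≤ n) (k : ℕ) :
    2 * ∑ i ∈ range (k + 1), n.choose i ≤ n ^ (k + 2) := calc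
  2 * ∑ i ∈ range (k + 1), n.choose i ≤ n * ∑ i ∈ range (k + 1), n ^ i := by
      gcongr with i
      exact Nat.choose_le_pow n i
  _ ≤ n * n ^ (k + 1) := by
      gcongr
      exact (Nat.geomSum_lt hn (by simp)).le
  _ = n ^ (k + 2) := by ring

lemma logb_le_of_le_two_mul_sum_choose {p : ℝ} (hp0 : 0 < p) (hp1 : p ≤ 1) {n m : ℕ}
    (hn : 3 ≤ n) (hm : m ≤ 2 * ∑ i ∈ range (⌈2 * Real.log n / p⌉₊ + 1), n.choose i) :
    Real.logb 2 m ≤ 10 * Real.log n ^ 2 / p := by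
  set k := ⌈2 * Real.log n / p⌉₊
  set L := Real.log n
  have hL : 1 ≤ L := by
    rw [Real.le_log_iff_exp_le (by positivity)]
    have : (3 : ℝ) ≤ n := by exact_mod_cast hn
    linarith [Real.exp_one_lt_d9]
  have hk : (k : ℝ) + 2 ≤ 5 * L / p := by
    have hceil := Nat.ceil_lt_add_one (show 0 ≤ 2 * L / p by positivity)
    have hthree : 3 ≤ 3 * L / p := by rw [le_div_iff₀ hp0]; nlinarith
    rw [show 5 * L / p = 2 * L / p + 3 * L / p by ring]
    linarith
  have hlogb : Real.logb 2 n ≤ 2 * L := by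
    rw [Real.logb, div_le_iff₀ (by positivity)]
    nlinarith [Real.log_two_gt_d9]
  rcases m.eq_zero_or_pos with rfl | hm0
  · simp only [CharP.cast_eq_zero, Real.logb_zero]
    positivity
  calc Real.logb 2 m ≤ Real.logb 2 ((n : ℝ) ^ (k + 2)) := by
        gcongr
        · norm_num
        · exact_mod_cast hm.trans (two_mul_sum_choose_le_pow (by omega) k)
    _ = (k + 2) * Real.logb 2 n := by rw [Real.logb_pow]; push_cast; ring
    _ ≤ 5 * L / p * (2 * L) :=
        mul_le_mul hk hlogb (Real.logb_nonneg one_lt_two (by exact_mod_cast (by omega : 1 ≤ n)))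
          (by positivity)
    _ = 10 * L ^ 2 / p := by ring

section ProbabilityOne

variable {ι : Type*} {l : Filter ι} {Ω : ι → Type*} [∀ i, MeasurableSpace (Ω i)]
  {μ : ∀ i, Measure (Ω i)} [∀ i, IsProbabilityMeasure (μ i)] {s t : ∀ i, Set (Ω i)}

lemma tendsto_measure_one_of_tendsto_measure_compl [∀ i, DiscreteMeasurableSpace (Ω i)]
    (h : Tendsto (fun i => μ i (s i)ᶜ) l (nhds 0)) : Tendsto (fun i => μ i (s i)) l (nhds 1) := by
  have := ENNReal.Tendsto.sub tendsto_const_nhds h (Or.inl ENNReal.one_ne_top)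
  simp only [tsub_zero] at this
  refine this.congr fun i => ?_
  rw [prob_compl_eq_one_sub .of_discrete, ENNReal.sub_sub_cancel ENNReal.one_ne_top prob_le_one]

lemma tendsto_measure_one_of_eventually_subset (hst : ∀ᶠ i in l, s i ⊆ t i)
    (hs : Tendsto (fun i => μ i (s i)) l (nhds 1)) : Tendsto (fun i => μ i (t i)) l (nhds 1) :=
  tendsto_of_tendsto_of_tendsto_of_le_of_le' hs tendsto_const_nhds
    (hst.mono fun _ h => measure_mono h) (.of_forall fun _ => prob_le_one)

end ProbabilityOne

/-- for fixed `p ∈ (0,1)` and `k_n = ⌈2 ln n / p⌉`, asymptotically almost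
surely every cut `{A, Ā}` of `G(n,p)` satisfies `|𝒩(A)| ≤ 2 · ∑_{i=0}^{k_n} C(n,i)`;
in particular there is a constant `c > 0` such that asymptotically almost surely every cut
satisfies `cut-bool(A) ≤ c (ln n)² / p` (so every decomposition tree of `G(n,p)` almost
surely has boolean-width `O((ln n)²/p)`). -/
theorem gnp_all_cuts_small_boolwidth (p : ℝ) (hp0 : 0 < p) (hp1 : p < 1) :
    Tendsto
      (fun n : ℕ =>
        gnp n p hp1.le
          {f | ∀ A : Finset (Fin n),
            (nbhdFamily (graphOf f) A).card ≤
              2 * ∑ i ∈ Finset.range (⌈2 * Real.log n / p⌉₊ + 1), n.choose i})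
      atTop (nhds (1 : ℝ≥0∞)) ∧
    ∃ c : ℝ, 0 < c ∧
      Tendsto
        (fun n : ℕ =>
          gnp n p hp1.le
            {f | ∀ A : Finset (Fin n),
              Real.logb 2 ((nbhdFamily (graphOf f) A).card) ≤ c * (Real.log n) ^ 2 / p})
        atTop (nhds (1 : ℝ≥0∞)) := by
  set k : ℕ → ℕ := fun n => ⌈2 * Real.log n / p⌉₊
  have hk : Tendsto k atTop atTop := tendsto_nat_ceil_atTop.comp <|
    ((Real.tendsto_log_atTop.comp tendsto_natCast_atTop_atTop).const_mul_atTop two_pos)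
      |>.atTop_div_const hp0
  have hbad : Tendsto (fun n => gnp n p hp1.le {f | ¬ (graphOf f).JoinsDisjointSets (k n)})
      atTop (nhds 0) := by
    have hfact : Tendsto (fun n => ENNReal.ofReal ((((k n)! : ℝ)⁻¹) ^ 2)) atTop (nhds 0) := by
      simpa using ENNReal.tendsto_ofReal ((tendsto_inv_atTop_zero.comp
        (tendsto_natCast_atTop_atTop.comp (factorial_tendsto_atTop.comp hk))).pow 2)
    refine tendsto_of_tendsto_of_tendsto_of_le_of_le' tendsto_const_nhds hfact
      (.of_forall fun _ => bot_le) ?_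
    filter_upwards [eventually_gt_atTop 0] with n hn
    refine (gnp_not_joinsDisjointSets_le hp0.le hp1.le _).trans
      (ENNReal.ofReal_le_ofReal (choose_sq_mul_one_sub_pow_le hp1.le hn ?_))
    exact (div_le_iff₀' hp0).mp (Nat.le_ceil _)
  have hcuts : Tendsto (fun n => gnp n p hp1.le {f | ∀ A : Finset (Fin n),
      #(nbhdFamily (graphOf f) A) ≤ 2 * ∑ i ∈ range (k n + 1), n.choose i}) atTop (nhds 1) :=
    tendsto_measure_one_of_eventually_subset
      (.of_forall fun n f (hf : (graphOf f).JoinsDisjointSets (k n)) A => by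
        simpa using hf.card_nbhdFamily_le A)
      (tendsto_measure_one_of_tendsto_measure_compl hbad)
  refine ⟨hcuts, 10, by norm_num, tendsto_measure_one_of_eventually_subset ?_ hcuts⟩
  filter_upwards [eventually_ge_atTop 3] with n hn f hf A
  exact logb_le_of_le_two_mul_sum_choose hp0 hp1.le hn (hf A)
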